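/- Let A = M + Λ be a periodic point set in ℝ³. For each integer k ≥ 0 and t ≥ 0, define ψ_k^A(t) = vol(U ∩ ⋃^k A(t)) / vol(U), the fractional volume of the k-fold cover of the balls of radius t around points of A intersected with the unit cell U. Then ψ_k^A is invariant under isometries: if φ: ℝ³ → ℝ³ is an isometry and Q = φ(A), then ψ_k^Q = ψ_k^A for all k. -/

import Mathlib

open MeasureTheory Set Metric Pointwise

noncomputable section

/-- 3-dimensional Euclidean space. -/
abbrev E3 := EuclideanSpace ℝ (Fin 3)

/-- The lattice generated by the vectors `b 0, b 1, b 2`. -/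
def lat (b : Fin 3 → E3) : Set E3 := {x | ∃ n : Fin 3 → ℤ, x = ∑ i, (n i : ℝ) • b i}

/-- The unit cell spanned by the vectors `b 0, b 1, b 2`. -/
def cell (b : Fin 3 → E3) : Set E3 :=
  {x | ∃ c : Fin 3 → ℝ, (∀ i, 0 ≤ c i ∧ c i < 1) ∧ x = ∑ i, c i • b i}

/-- The `k`-fold cover: points lying in at least `k` closed balls of radius `t`
centered at points of `A`. -/
def coverGE (A : Set E3) (t : ℝ) (k : ℕ) : Set E3 :=
  {x | ∃ F : Finset E3, F.card = k ∧ ↑F ⊆ A ∧ ∀ a ∈ F, dist x a ≤ t}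

/-- Points lying in exactly `k` closed balls of radius `t` centered at points of `A`. -/
def coverEQ (A : Set E3) (t : ℝ) (k : ℕ) : Set E3 :=
  {x | ∃ F : Finset E3, ↑F = {a ∈ A | dist x a ≤ t} ∧ F.card = k}

/-- The `k`-th Dirichlet–Voronoi domain of `a` in `A` (with `D_0 = ∅`). -/
def DV (A : Set E3) (a : E3) : ℕ → Set E3
  | 0 => ∅
  | (k+1) => {x | ({b ∈ A | dist x b < dist x a}).ncard ≤ k}

/-- The `k`-th Brillouin zone of `a` in `A`. -/
def BZ (A : Set E3) (a : E3) (k : ℕ) : Set E3 := DV A a k \ DV A a (k-1)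

/-!
The lattice of `Q` need not be the image under `φ` of that of `A`, so the two cells cannot be
compared directly. Instead, a set `S` invariant under a lattice with bounded fundamental domain `D`
has a density: `μ (S ∩ closedBall x R) / μ (closedBall x R) → μ (S ∩ D) / μ D` as `R → ∞`, since
the translates of `D` inside `closedBall x R` fill it up to a shell of width `diam D`, whose
relative volume tends to `0`. The `k`-fold cover of `Q` is the image under `φ` of that of `A`, and
`φ` preserves volume and maps balls about `0` to balls about `φ 0`, so both fractional volumes are
the limit of the same function of `R`.
-/

open Filter Topology Function

theorem MeasureTheory.Measure.tendsto_measure_closedBall_add_div_measure_closedBall {E : Type*}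
    [NormedAddCommGroup E] [NormedSpace ℝ E] [FiniteDimensional ℝ E] [MeasurableSpace E]
    [BorelSpace E] (μ : Measure E) [μ.IsAddHaarMeasure] (x : E) (a : ℝ) :
    Tendsto (fun R ↦ μ (closedBall x (R + a)) / μ (closedBall x R)) atTop (𝓝 1) := by
  set n := Module.finrank ℝ E
  have hratio : ∀ᶠ R : ℝ in atTop, ENNReal.ofReal ((1 + a * R⁻¹) ^ n) =
      μ (closedBall x (R + a)) / μ (closedBall x R) := by
    filter_upwards [eventually_gt_atTop (max 0 (-a))] with R hR
    have hR0 : 0 < R := (le_max_left _ _).trans_lt hR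
    have hRa : 0 ≤ R + a := by linarith [le_max_right 0 (-a)]
    rw [Measure.addHaar_closedBall μ x hRa, Measure.addHaar_closedBall μ x hR0.le,
      ENNReal.mul_div_mul_right _ _ (measure_ball_pos μ 0 one_pos).ne' measure_ball_lt_top.ne,
      ← ENNReal.ofReal_div_of_pos (pow_pos hR0 n), ← div_pow, add_div, div_self hR0.ne',
      div_eq_mul_inv]
  have hlim : Tendsto (fun R : ℝ ↦ ENNReal.ofReal ((1 + a * R⁻¹) ^ n)) atTop (𝓝 1) := by
    simpa using ENNReal.tendsto_ofReal
      (((tendsto_const_nhds (x := (1 : ℝ))).add (tendsto_inv_atTop_zero.const_mul a)).pow n)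
  exact hlim.congr' hratio

namespace MeasureTheory.IsAddFundamentalDomain

section Action

variable {G α : Type*} [AddGroup G] [Countable G] [AddAction G α] [MeasurableSpace α]
  [MeasurableConstVAdd G α] {μ : Measure α} [VAddInvariantMeasure G α μ] {D S : Set α}

theorem measure_inter_biUnion_vadd_mul (hD : IsAddFundamentalDomain G D μ)
    (hS : NullMeasurableSet S μ) (hSG : ∀ g : G, g +ᵥ S = S) (T : Set G) :
    μ (S ∩ ⋃ g ∈ T, g +ᵥ D) * μ D = μ (⋃ g ∈ T, g +ᵥ D) * μ (S ∩ D) := by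
  have hdisj : T.Pairwise (AEDisjoint μ on fun g : G ↦ g +ᵥ D) := hD.aedisjoint.set_pairwise T
  have htranslate (g : G) : S ∩ (g +ᵥ D) = g +ᵥ (S ∩ D) := by rw [vadd_set_inter, hSG]
  rw [inter_iUnion₂,
    measure_biUnion₀ T.to_countable
      (hdisj.mono' fun _ _ h ↦ h.mono inter_subset_right inter_subset_right)
      fun g _ ↦ hS.inter (hD.nullMeasurableSet_vadd g),
    measure_biUnion₀ T.to_countable hdisj fun g _ ↦ hD.nullMeasurableSet_vadd g,
    ← ENNReal.tsum_mul_right, ← ENNReal.tsum_mul_right]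
  simp only [htranslate, measure_vadd, mul_comm]

end Action

variable {E : Type*} [NormedAddCommGroup E] [MeasurableSpace E] {μ : Measure E}
  {Λ : AddSubgroup E} {D S : Set E}

theorem closedBall_sub_diam_ae_le_biUnion_vadd (hD : IsAddFundamentalDomain Λ D μ)
    (hDb : Bornology.IsBounded D) (x : E) (r : ℝ) :
    closedBall x (r - diam D) ≤ᵐ[μ] ⋃ g ∈ {g : Λ | g +ᵥ D ⊆ closedBall x r}, g +ᵥ D := by
  filter_upwards [hD.ae_covers] with y ⟨g, hg⟩ hy
  have hy' : y ∈ -g +ᵥ D := mem_vadd_set_iff_neg_vadd_mem.2 (by rwa [neg_neg])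
  refine mem_biUnion (x := -g) (fun z hz ↦ ?_) hy'
  have hzy : dist z y ≤ diam D := by
    rw [← diam_vadd (-g : E) D]
    exact dist_le_diam_of_mem (hDb.vadd _) hz hy'
  exact mem_closedBall.2 <| (dist_triangle z y x).trans (by linarith [mem_closedBall.1 hy])

variable [NormedSpace ℝ E] [FiniteDimensional ℝ E] [BorelSpace E] [μ.IsAddHaarMeasure]
  [Countable Λ]

theorem tendsto_measure_inter_closedBall_div (hD : IsAddFundamentalDomain Λ D μ)
    (hDb : Bornology.IsBounded D) (hS : NullMeasurableSet S μ) (hSΛ : ∀ g : Λ, g +ᵥ S = S)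
    (x : E) :
    Tendsto (fun R ↦ μ (S ∩ closedBall x R) / μ (closedBall x R)) atTop
      (𝓝 (μ (S ∩ D) / μ D)) := by
  have hD0 : μ D ≠ 0 := hD.measure_ne_zero (NeZero.ne μ)
  have hDtop : μ D ≠ ⊤ := hDb.measure_lt_top.ne
  set ρ := μ (S ∩ D) / μ D
  set d := diam D
  set U : ℝ → Set E := fun r ↦ ⋃ g ∈ {g : Λ | g +ᵥ D ⊆ closedBall x r}, g +ᵥ D
  have hU_subset (r : ℝ) : U r ⊆ closedBall x r := iUnion₂_subset fun _ hg ↦ hg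
  have hU_cover (r : ℝ) : closedBall x (r - d) ≤ᵐ[μ] U r :=
    hD.closedBall_sub_diam_ae_le_biUnion_vadd hDb x r
  have hU_density (r : ℝ) : μ (S ∩ U r) = μ (U r) * ρ := by
    rw [← mul_div_assoc, ENNReal.eq_div_iff hD0 hDtop, mul_comm,
      hD.measure_inter_biUnion_vadd_mul hS hSΛ]
  have hlower (R : ℝ) : μ (closedBall x (R - d)) * ρ ≤ μ (S ∩ closedBall x R) :=
    calc μ (closedBall x (R - d)) * ρ ≤ μ (U R) * ρ :=
          mul_le_mul_left (measure_mono_ae (hU_cover R)) ρ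
      _ = μ (S ∩ U R) := (hU_density R).symm
      _ ≤ μ (S ∩ closedBall x R) := by gcongr; exact hU_subset R
  have hupper (R : ℝ) : μ (S ∩ closedBall x R) ≤ μ (closedBall x (R + d)) * ρ :=
    calc μ (S ∩ closedBall x R) ≤ μ (S ∩ U (R + d)) := by
          refine measure_mono_ae (EventuallyLE.inter (ae_of_all _ fun _ ↦ id) ?_)
          simpa using hU_cover (R + d)
      _ = μ (U (R + d)) * ρ := hU_density _
      _ ≤ μ (closedBall x (R + d)) * ρ := by gcongr; exact hU_subset _
  have hlim (a : ℝ) :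
      Tendsto (fun R ↦ μ (closedBall x (R + a)) / μ (closedBall x R) * ρ) atTop (𝓝 ρ) := by
    simpa using ENNReal.Tendsto.mul_const
      (μ.tendsto_measure_closedBall_add_div_measure_closedBall x a) (.inl one_ne_zero)
  refine tendsto_of_tendsto_of_tendsto_of_le_of_le (hlim (-d)) (hlim d) (fun R ↦ ?_) fun R ↦ ?_
  · rw [← ENNReal.mul_div_right_comm, ← sub_eq_add_neg]
    exact ENNReal.div_le_div_right (hlower R) _
  · rw [← ENNReal.mul_div_right_comm]
    exact ENNReal.div_le_div_right (hupper R) _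

end MeasureTheory.IsAddFundamentalDomain

theorem IsometryEquiv.volume_image {V : Type*} [NormedAddCommGroup V] [InnerProductSpace ℝ V]
    [FiniteDimensional ℝ V] [MeasurableSpace V] [BorelSpace V] (φ : V ≃ᵢ V) (s : Set V) :
    volume (φ '' s) = volume s := by
  rw [← InnerProductSpace.euclideanHausdorffMeasure_eq_volume,
    φ.isometry.euclideanHausdorffMeasure_image]

theorem vadd_add_coe_addSubgroup {G : Type*} [AddCommGroup G] (Λ : AddSubgroup G) (s : Set G)
    {v : G} (hv : v ∈ Λ) : v +ᵥ (s + (Λ : Set G)) = s + Λ := by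
  rw [← add_vadd_comm, vadd_coe_set hv]

theorem lat_eq_span (b : Fin 3 → E3) : lat b = Submodule.span ℤ (range b) := by
  ext x
  simp only [lat, mem_ofPred_eq, SetLike.mem_coe, Submodule.mem_span_range_iff_exists_fun,
    ← Int.cast_smul_eq_zsmul ℝ, eq_comm]

theorem exists_basis_coe_eq {b : Fin 3 → E3} (hb : LinearIndependent ℝ b) :
    ∃ B : Module.Basis (Fin 3) ℝ E3, ⇑B = b :=
  ⟨basisOfLinearIndependentOfCardEqFinrank hb (by simp),
    coe_basisOfLinearIndependentOfCardEqFinrank hb _⟩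

theorem cell_eq_fundamentalDomain (B : Module.Basis (Fin 3) ℝ E3) :
    cell B = ZSpan.fundamentalDomain B := by
  ext x
  simp only [cell, ZSpan.mem_fundamentalDomain, mem_Ico, mem_ofPred_eq]
  constructor
  · rintro ⟨c, hc, rfl⟩ i
    rw [B.repr_sum_self]
    exact hc i
  · exact fun hx ↦ ⟨fun i ↦ B.repr x i, hx, (B.sum_repr x).symm⟩

theorem isAddFundamentalDomain_cell (B : Module.Basis (Fin 3) ℝ E3) (μ : Measure E3) :
    IsAddFundamentalDomain (Submodule.span ℤ (range B)).toAddSubgroup (cell B) μ := by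
  rw [cell_eq_fundamentalDomain]
  exact ZSpan.isAddFundamentalDomain' B μ

theorem image_coverGE_subset (φ : E3 ≃ᵢ E3) (A : Set E3) (t : ℝ) (k : ℕ) :
    φ '' coverGE A t k ⊆ coverGE (φ '' A) t k := by
  classical
  rintro _ ⟨x, ⟨F, hcard, hFA, hFt⟩, rfl⟩
  refine ⟨F.image φ, by rw [F.card_image_of_injective φ.injective, hcard], ?_, ?_⟩
  · rw [Finset.coe_image]
    exact image_mono hFA
  · simpa [φ.dist_eq] using hFt

theorem coverGE_image (φ : E3 ≃ᵢ E3) (A : Set E3) (t : ℝ) (k : ℕ) :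
    coverGE (φ '' A) t k = φ '' coverGE A t k := by
  refine Subset.antisymm ?_ (image_coverGE_subset φ A t k)
  have h := image_coverGE_subset φ.symm (φ '' A) t k
  rw [image_image] at h
  simp only [IsometryEquiv.symm_apply_apply, image_id'] at h
  exact fun y hy ↦ ⟨φ.symm y, h ⟨y, hy, rfl⟩, φ.apply_symm_apply y⟩

theorem measurableSet_coverGE {A : Set E3} (hA : A.Countable) (t : ℝ) (k : ℕ) :
    MeasurableSet (coverGE A t k) := by
  have hsub : {F : Finset E3 | ↑F ⊆ A ∧ F.card = k}.Countable :=
    ((countable_ofPred_finite_subset hA).preimage Finset.coe_injective).mono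
      fun F hF ↦ show (F : Set E3).Finite ∧ ↑F ⊆ A from ⟨F.finite_toSet, hF.1⟩
  have hcover : coverGE A t k = ⋃ F ∈ {F : Finset E3 | ↑F ⊆ A ∧ F.card = k},
      ⋂ a ∈ F, closedBall a t := by
    ext x
    simp only [coverGE, mem_ofPred_eq, mem_iUnion, mem_iInter, mem_closedBall, exists_prop]
    exact ⟨fun ⟨F, h1, h2, h3⟩ ↦ ⟨F, ⟨h2, h1⟩, h3⟩, fun ⟨F, ⟨h2, h1⟩, h3⟩ ↦ ⟨F, h1, h2, h3⟩⟩
  rw [hcover]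
  exact .biUnion hsub fun F _ ↦ .biInter F.countable_toSet fun _ _ ↦ measurableSet_closedBall

theorem vadd_coverGE (v : E3) (A : Set E3) (t : ℝ) (k : ℕ) :
    v +ᵥ coverGE A t k = coverGE (v +ᵥ A) t k := by
  rw [← image_vadd, ← image_vadd]
  exact (coverGE_image (IsometryEquiv.constVAdd (X := E3) v) A t k).symm

theorem tendsto_volume_coverGE_inter_closedBall_div (B : Module.Basis (Fin 3) ℝ E3)
    (M : Finset E3) (t : ℝ) (k : ℕ) (x : E3) :
    Tendsto (fun R ↦ volume (coverGE (↑M + lat B) t k ∩ closedBall x R) / volume (closedBall x R))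
      atTop (𝓝 (volume (coverGE (↑M + lat B) t k ∩ cell B) / volume (cell B))) := by
  set Λ := (Submodule.span ℤ (range B)).toAddSubgroup
  have : Countable Λ := inferInstanceAs (Countable (Submodule.span ℤ (range B)))
  have hlat : lat B = Λ := lat_eq_span B
  have hcount : (↑M + lat B : Set E3).Countable := by
    rw [← image2_add]
    exact M.countable_toSet.image2 (hlat ▸ (Λ : Set E3).to_countable) _
  refine (isAddFundamentalDomain_cell B volume).tendsto_measure_inter_closedBall_div
    (cell_eq_fundamentalDomain B ▸ ZSpan.fundamentalDomain_isBounded B)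
    (measurableSet_coverGE hcount t k).nullMeasurableSet (fun g ↦ ?_) x
  change (g : E3) +ᵥ coverGE (↑M + lat B) t k = coverGE (↑M + lat B) t k
  rw [vadd_coverGE, hlat, vadd_add_coe_addSubgroup Λ _ g.2]

theorem fractional_cover_isometry_invariant_general (bA bQ : Fin 3 → E3)
    (hbA : LinearIndependent ℝ bA) (hbQ : LinearIndependent ℝ bQ)
    (MA MQ : Finset E3)
    (A Q : Set E3) (hA : A = ↑MA + lat bA) (hQ : Q = ↑MQ + lat bQ)
    (φ : E3 ≃ᵢ E3) (hφ : Q = φ '' A) (k : ℕ) (t : ℝ) :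
    volume (cell bQ ∩ coverGE Q t k) / volume (cell bQ) =
      volume (cell bA ∩ coverGE A t k) / volume (cell bA) := by
  obtain ⟨BA, rfl⟩ := exists_basis_coe_eq hbA
  obtain ⟨BQ, rfl⟩ := exists_basis_coe_eq hbQ
  have hlimA := hA ▸ tendsto_volume_coverGE_inter_closedBall_div BA MA t k 0
  have hlimQ := hQ ▸ tendsto_volume_coverGE_inter_closedBall_div BQ MQ t k (φ 0)
  have hsame : (fun R ↦ volume (coverGE Q t k ∩ closedBall (φ 0) R) / volume (closedBall (φ 0) R))
      = fun R ↦ volume (coverGE A t k ∩ closedBall 0 R) / volume (closedBall (0 : E3) R) := by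
    funext R
    rw [hφ, coverGE_image, ← φ.image_closedBall, ← image_inter φ.injective, φ.volume_image,
      φ.volume_image]
  rw [inter_comm, inter_comm (cell _)]
  exact tendsto_nhds_unique (hsame ▸ hlimQ) hlimA

theorem fractional_cover_isometry_invariant (bA bQ : Fin 3 → E3)
    (hbA : LinearIndependent ℝ bA) (hbQ : LinearIndependent ℝ bQ)
    (MA MQ : Finset E3) (hMA : ↑MA ⊆ cell bA) (hMQ : ↑MQ ⊆ cell bQ)
    (A Q : Set E3) (hA : A = ↑MA + lat bA) (hQ : Q = ↑MQ + lat bQ)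
    (φ : E3 ≃ᵢ E3) (hφ : Q = φ '' A) (k : ℕ) (t : ℝ) :
    volume (cell bQ ∩ coverGE Q t k) / volume (cell bQ) =
      volume (cell bA ∩ coverGE A t k) / volume (cell bA) :=
  fractional_cover_isometry_invariant_general bA bQ hbA hbQ MA MQ A Q hA hQ φ hφ k t
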